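/- arXiv:math/0504533 — 4 statements merged into one kernel-verified Lean document; each statement's English description precedes it below -/
import Mathlib

section
/- The p-adic logarithmic distance satisfies the ultrametric-type triangle inequality: for every P, Q, T in P^1(K), δ_p(P,T) ≥ min{δ_p(P,Q), δ_p(Q,T)}. -/
open IsDedekindDomain
open scoped Classical

variable {K : Type*}

/-- The normalized additive `p`-adic valuation on `K`, with `v_p(0) = ∞`. -/
noncomputable def addValp [Field K] [NumberField K]
    (p : HeightOneSpectrum (NumberField.RingOfIntegers K)) (x : K) : WithTop ℤ :=
  if hx : x = 0 then ⊤
  else ((- Multiplicative.toAdd (WithZero.unzero (((p.valuation K).ne_zero_iff).mpr hx)) : ℤ) :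
    WithTop ℤ)

/-- The `p`-adic logarithmic distance `δ_p` between points of `ℙ¹(K)` given by homogeneous
coordinates `P = (x₁, y₁)` and `Q = (x₂, y₂)`:
`δ_p(P,Q) = v_p(x₁y₂ - x₂y₁) - min (v_p x₁) (v_p y₁) - min (v_p x₂) (v_p y₂)`. -/
noncomputable def deltap [Field K] [NumberField K]
    (p : HeightOneSpectrum (NumberField.RingOfIntegers K)) (P Q : K × K) : WithTop ℤ :=
  addValp p (P.1 * Q.2 - Q.1 * P.2) - min (addValp p P.1) (addValp p P.2)
    - min (addValp p Q.1) (addValp p Q.2)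

/-!
Write `[P, Q] = x₁y₂ - x₂y₁` and `m(R) = min (v_p x) (v_p y)` for `R = (x, y)`. The Plücker
identity `[P, Q] • T + [Q, T] • P = [P, T] • Q` holds in `K²`, `m` is ultrametric and
`m(c • R) = v_p c + m(R)`, so `min (v[P,Q] + m T) (v[Q,T] + m P) ≤ v[P,T] + m Q`; subtracting
`m P + m Q + m T` gives the triangle inequality.
-/

namespace Deltap

lemma cross_smul_add_cross_smul {R : Type*} [CommRing R] (P Q T : R × R) :
    (P.1 * Q.2 - Q.1 * P.2) • T + (Q.1 * T.2 - T.1 * Q.2) • P = (P.1 * T.2 - T.1 * P.2) • Q := by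
  ext <;> simp only [Prod.fst_add, Prod.snd_add, Prod.smul_fst, Prod.smul_snd, smul_eq_mul] <;> ring

variable [Field K] [NumberField K] (p : HeightOneSpectrum (NumberField.RingOfIntegers K))

lemma addValp_eq_top_iff {x : K} : addValp p x = ⊤ ↔ x = 0 := by
  by_cases hx : x = 0 <;> simp [addValp, hx]

lemma addValp_mul (x y : K) : addValp p (x * y) = addValp p x + addValp p y := by
  by_cases hx : x = 0
  · simp [addValp, hx]
  by_cases hy : y = 0
  · simp [addValp, hy]
  have hxy : x * y ≠ 0 := mul_ne_zero hx hy
  simp only [addValp, dif_neg hx, dif_neg hy, dif_neg hxy]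
  rw [← WithTop.coe_add, WithTop.coe_eq_coe]
  have h : WithZero.unzero (((p.valuation K).ne_zero_iff).mpr hxy)
      = WithZero.unzero (((p.valuation K).ne_zero_iff).mpr hx)
        * WithZero.unzero (((p.valuation K).ne_zero_iff).mpr hy) := by
    rw [← WithZero.coe_inj]
    push_cast [WithZero.coe_unzero]
    exact map_mul _ x y
  rw [h, toAdd_mul]
  ring

lemma addValp_le_addValp_of_valuation_le {x y : K} (hx : x ≠ 0) (hy : y ≠ 0)
    (h : p.valuation K x ≤ p.valuation K y) : addValp p y ≤ addValp p x := by
  simp only [addValp, dif_neg hx, dif_neg hy, WithTop.coe_le_coe, neg_le_neg_iff]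
  refine Multiplicative.toAdd_le.mpr ?_
  rw [← WithZero.coe_le_coe, WithZero.coe_unzero, WithZero.coe_unzero]
  exact h

lemma min_addValp_le_addValp_add (x y : K) :
    min (addValp p x) (addValp p y) ≤ addValp p (x + y) := by
  by_cases hx : x = 0
  · simp [hx]
  by_cases hy : y = 0
  · simp [hy]
  by_cases hxy : x + y = 0
  · simp [addValp, hxy]
  rcases le_total (p.valuation K x) (p.valuation K y) with hle | hle
  · exact (min_le_right _ _).trans <| addValp_le_addValp_of_valuation_le p hxy hy <|
      (Valuation.map_add _ x y).trans (max_eq_right hle).le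
  · exact (min_le_left _ _).trans <| addValp_le_addValp_of_valuation_le p hxy hx <|
      (Valuation.map_add _ x y).trans (max_eq_left hle).le

noncomputable def minValp (R : K × K) : WithTop ℤ :=
  min (addValp p R.1) (addValp p R.2)

lemma minValp_smul (c : K) (R : K × K) : minValp p (c • R) = addValp p c + minValp p R := by
  simp only [minValp, Prod.smul_fst, Prod.smul_snd, smul_eq_mul, addValp_mul, min_add_add_left]

lemma min_minValp_le_minValp_add (R S : K × K) :
    min (minValp p R) (minValp p S) ≤ minValp p (R + S) := by
  simp only [minValp, Prod.fst_add, Prod.snd_add, le_min_iff]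
  constructor
  · exact (min_le_min (min_le_left _ _) (min_le_left _ _)).trans (min_addValp_le_addValp_add p _ _)
  · exact (min_le_min (min_le_right _ _) (min_le_right _ _)).trans
      (min_addValp_le_addValp_add p _ _)

lemma min_addValp_cross_add_le (P Q T : K × K) :
    min (addValp p (P.1 * Q.2 - Q.1 * P.2) + minValp p T)
      (addValp p (Q.1 * T.2 - T.1 * Q.2) + minValp p P)
      ≤ addValp p (P.1 * T.2 - T.1 * P.2) + minValp p Q := by
  simpa only [← minValp_smul, cross_smul_add_cross_smul] using
    min_minValp_le_minValp_add p ((P.1 * Q.2 - Q.1 * P.2) • T) ((Q.1 * T.2 - T.1 * Q.2) • P)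

lemma minValp_ne_top {R : K × K} (hR : R ≠ 0) : minValp p R ≠ ⊤ := by
  rw [Ne, minValp, min_eq_top, addValp_eq_top_iff, addValp_eq_top_iff]
  exact fun h => hR (Prod.ext h.1 h.2)

end Deltap

lemma WithTop.min_sub_sub_le_of_min_add_le {x y z a c : WithTop ℤ} {b : ℤ}
    (h : min (x + c) (y + a) ≤ z + b) : min (x - a - b) (y - b - c) ≤ z - a - c := by
  induction a <;> induction c <;> induction x <;> induction y <;> induction z <;>
    simp at h ⊢ <;> norm_cast at h ⊢ <;> omega

open Deltap in
theorem deltap_triangle_general [Field K] [NumberField K]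
    (p : HeightOneSpectrum (NumberField.RingOfIntegers K))
    (P Q T : K × K) (hQ : Q ≠ 0) :
    min (deltap p P Q) (deltap p Q T) ≤ deltap p P T := by
  obtain ⟨b, hb⟩ := WithTop.ne_top_iff_exists.mp (minValp_ne_top p hQ)
  have key := WithTop.min_sub_sub_le_of_min_add_le (hb ▸ min_addValp_cross_add_le p P Q T)
  rwa [hb] at key

/-- the `p`-adic logarithmic distance satisfies the ultrametric-type triangle
inequality `δ_p(P,T) ≥ min (δ_p(P,Q)) (δ_p(Q,T))` for all points `P, Q, T` of `ℙ¹(K)`. -/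
theorem deltap_triangle [Field K] [NumberField K]
    (p : HeightOneSpectrum (NumberField.RingOfIntegers K))
    (P Q T : K × K) (hP : P ≠ 0) (hQ : Q ≠ 0) (hT : T ≠ 0) :
    min (deltap p P Q) (deltap p Q T) ≤ deltap p P T :=
  deltap_triangle_general p P Q T hQ
end

section
/- The number of PGL_2(R_S)-orbits on P^1(K) equals the class number of R_S: two points [x:y] and [x':y'] with S-integral coordinates are in the same orbit if and only if the fractional ideals (xR_S + yR_S) and (x'R_S + y'R_S) are in the same ideal class. -/
open IsDedekindDomain

set_option maxHeartbeats 1000000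
set_option synthInstance.maxHeartbeats 400000

/-- The ring of `S`-integers of a number field `K`. -/
noncomputable abbrev sIntegers (K : Type*) [Field K] [NumberField K]
    (S : Finset (HeightOneSpectrum (NumberField.RingOfIntegers K))) :=
  ((S : Set (HeightOneSpectrum (NumberField.RingOfIntegers K))).integer K)

/-!
The ring of `S`-integers is the localization of `𝓞 K` at the elements lying in no prime outside
`S`: the denominator ideal of an `S`-integer lies in no such prime, and since the class group is
finite some power of it is principal, which yields such a denominator. Hence `R_S` is a Dedekind
domain with fraction field `K`.

A matrix in `GL₂(R_S)` preserves the ideal generated by the coordinates of a vector. Conversely, if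
`(p, q)` and `(p', q')` generate the same nonzero ideal `I`, invertibility of `I` gives Bézout
relations `p α + q β = 1 = p' ν + q' μ` with `α, β, ν, μ ∈ I⁻¹`, and these produce an explicit
matrix of `SL₂(R_S)` taking `(p, q)` to `(p', q')`. Clearing the denominator of the scalar
`l = d / c` reduces both sides of the theorem to the vectors `(c x, c y)` and `(d x', d y')`.
-/

open Matrix
open scoped nonZeroDivisors MatrixGroups

section
variable {R : Type*} [CommRing R]

theorem Ideal.span_range_mulVec_le {m n : Type*} [Fintype n] (A : Matrix m n R) (v : n → R) :
    Ideal.span (Set.range (A *ᵥ v)) ≤ Ideal.span (Set.range v) := by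
  rw [Ideal.span_le]
  rintro _ ⟨i, rfl⟩
  exact Ideal.sum_mem _ fun j _ => Ideal.mul_mem_left _ _ (Ideal.subset_span ⟨j, rfl⟩)

theorem Ideal.span_range_units_mulVec {n : Type*} [Fintype n] [DecidableEq n] (A : GL n R)
    (v : n → R) : Ideal.span (Set.range ((A : Matrix n n R) *ᵥ v)) = Ideal.span (Set.range v) := by
  refine le_antisymm (Ideal.span_range_mulVec_le _ _) ?_
  simpa [mulVec_mulVec] using Ideal.span_range_mulVec_le (↑A⁻¹ : Matrix n n R) (↑A *ᵥ v)

theorem Ideal.span_singleton_mul_span_pair (c a b : R) :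
    Ideal.span {c} * Ideal.span {a, b} = Ideal.span {c * a, c * b} := by
  simp [Ideal.span_mul_span', Set.image_pair]

end

section
variable {R : Type*} [CommRing R] [IsDomain R] {K : Type*} [Field K] [Algebra R K]
  [IsFractionRing R K]

theorem exists_mul_eq_iff_exists_mulVec_eq (M : Matrix (Fin 2) (Fin 2) R) (x y x' y' : R) :
    (∃ l : K, l ≠ 0 ∧
        algebraMap R K (M 0 0) * algebraMap R K x + algebraMap R K (M 0 1) * algebraMap R K y
          = l * algebraMap R K x' ∧
        algebraMap R K (M 1 0) * algebraMap R K x + algebraMap R K (M 1 1) * algebraMap R K y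
          = l * algebraMap R K y') ↔
      ∃ c d : R, c ≠ 0 ∧ d ≠ 0 ∧ M *ᵥ ![c * x, c * y] = ![d * x', d * y'] := by
  have hinj := IsFractionRing.injective R K
  simp only [mulVec_fin_two, cons_val_zero, cons_val_one, vecCons_inj, and_true, ← hinj.eq_iff,
    map_add, map_mul]
  constructor
  · rintro ⟨l, hl, h0, h1⟩
    obtain ⟨d, c, hc, rfl⟩ := IsFractionRing.div_surjective (A := R) l
    have hcK : algebraMap R K c ≠ 0 := IsFractionRing.to_map_ne_zero_of_mem_nonZeroDivisors hc
    refine ⟨c, d, nonZeroDivisors.ne_zero hc, fun hd => hl (by simp [hd]), ?_, ?_⟩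
    · field_simp at h0
      linear_combination h0
    · field_simp at h1
      linear_combination h1
  · rintro ⟨c, d, hc, hd, h0, h1⟩
    have hcK : algebraMap R K c ≠ 0 := (map_ne_zero_iff _ hinj).mpr hc
    have hdK : algebraMap R K d ≠ 0 := (map_ne_zero_iff _ hinj).mpr hd
    refine ⟨algebraMap R K d / algebraMap R K c, div_ne_zero hdK hcK, ?_, ?_⟩
    · field_simp
      linear_combination h0
    · field_simp
      linear_combination h1

end

section
variable {R : Type*} [CommRing R] [IsDedekindDomain R]
open FractionalIdeal

theorem FractionalIdeal.exists_mem_inv_mul_add_mul_eq_one {K : Type*} [Field K] [Algebra R K]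
    [IsFractionRing R K] {p q : R} (h0 : Ideal.span {p, q} ≠ ⊥) :
    ∃ α ∈ ((Ideal.span {p, q} : Ideal R) : FractionalIdeal R⁰ K)⁻¹,
      ∃ β ∈ ((Ideal.span {p, q} : Ideal R) : FractionalIdeal R⁰ K)⁻¹,
      algebraMap R K p * α + algebraMap R K q * β = 1 := by
  have hI : ((Ideal.span {p, q} : Ideal R) : FractionalIdeal R⁰ K)
      = spanSingleton R⁰ (algebraMap R K p) + spanSingleton R⁰ (algebraMap R K q) := by
    rw [Ideal.span_insert, coeIdeal_sup, coeIdeal_span_singleton, coeIdeal_span_singleton]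
  set I : FractionalIdeal R⁰ K := ↑(Ideal.span {p, q} : Ideal R)
  have h1 : (1 : K) ∈ spanSingleton R⁰ (algebraMap R K p) * I⁻¹
      + spanSingleton R⁰ (algebraMap R K q) * I⁻¹ := by
    rw [← add_mul, ← hI, mul_inv_cancel₀ (coeIdeal_ne_zero.mpr h0)]
    exact one_mem_one _
  rw [← mem_coe, coe_add, Submodule.add_eq_sup, Submodule.mem_sup] at h1
  obtain ⟨_, hpα, _, hqβ, hsum⟩ := h1
  obtain ⟨α, hα, rfl⟩ := mem_singleton_mul.mp hpα
  obtain ⟨β, hβ, rfl⟩ := mem_singleton_mul.mp hqβ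
  exact ⟨α, hα, β, hβ, hsum⟩

theorem exists_SL2_mulVec_eq_of_span_pair_eq {p q p' q' : R}
    (h : Ideal.span {p, q} = Ideal.span {p', q'}) (h0 : Ideal.span {p, q} ≠ ⊥) :
    ∃ N : SL(2, R), (N : Matrix (Fin 2) (Fin 2) R) *ᵥ ![p, q] = ![p', q'] := by
  let K := FractionRing R
  obtain ⟨α, hα, β, hβ, hαβ⟩ := exists_mem_inv_mul_add_mul_eq_one (K := K) h0
  obtain ⟨ν, hν, μ, hμ, hνμ⟩ := exists_mem_inv_mul_add_mul_eq_one (K := K) (h ▸ h0)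
  rw [← h] at hν hμ
  set I : FractionalIdeal R⁰ K := ↑(Ideal.span {p, q} : Ideal R)
  have mem : ∀ r ∈ Ideal.span {p, q}, algebraMap R K r ∈ I :=
    fun r hr => (mem_coeIdeal _).mpr ⟨r, hr, rfl⟩
  have mem_p := mem p (Ideal.subset_span (by simp))
  have mem_q := mem q (Ideal.subset_span (by simp))
  have mem_p' := mem p' (h ▸ Ideal.subset_span (by simp))
  have mem_q' := mem q' (h ▸ Ideal.subset_span (by simp))
  have hI : I * I⁻¹ = 1 := mul_inv_cancel₀ (coeIdeal_ne_zero.mpr h0)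
  have integral : ∀ {t : K}, t ∈ (↑(I * I⁻¹) : Submodule R K) → ∃ r : R, algebraMap R K r = t :=
    fun ht => (mem_one_iff _).mp (hI ▸ ht)
  -- the matrix `!![p'α + qμ, p'β - pμ; q'α - qν, q'β + pν]` has entries in `I I⁻¹ = R` and
  -- determinant `p'ν + q'μ = 1`
  obtain ⟨a, ha⟩ := integral (Submodule.add_mem _ (mul_mem_mul mem_p' hα) (mul_mem_mul mem_q hμ))
  obtain ⟨b, hb⟩ := integral (Submodule.sub_mem _ (mul_mem_mul mem_p' hβ) (mul_mem_mul mem_p hμ))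
  obtain ⟨c, hc⟩ := integral (Submodule.sub_mem _ (mul_mem_mul mem_q' hα) (mul_mem_mul mem_q hν))
  obtain ⟨d, hd⟩ := integral (Submodule.add_mem _ (mul_mem_mul mem_q' hβ) (mul_mem_mul mem_p hν))
  have hdet : (!![a, b; c, d]).det = 1 := IsFractionRing.injective R K <| by
    simp only [det_fin_two_of, map_sub, map_mul, map_one, ha, hb, hc, hd]
    linear_combination (algebraMap R K p' * ν + algebraMap R K q' * μ) * hαβ + hνμ
  refine ⟨⟨!![a, b; c, d], hdet⟩, ?_⟩
  simp only [mulVec_fin_two, of_apply, cons_val', cons_val_zero, cons_val_one, cons_val_fin_one,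
    vecCons_inj, and_true, ← (IsFractionRing.injective R K).eq_iff, map_add, map_mul, ha, hb, hc,
    hd]
  constructor
  · linear_combination algebraMap R K p' * hαβ
  · linear_combination algebraMap R K q' * hαβ

theorem Ideal.exists_mem_ne_zero_forall_isPrime_le [Finite (ClassGroup R)] {I : Ideal R}
    (hI : I ≠ ⊥) : ∃ a ∈ I, a ≠ 0 ∧ ∀ P : Ideal R, P.IsPrime → a ∈ P → I ≤ P := by
  have hI₀ : I ∈ (Ideal R)⁰ := mem_nonZeroDivisors_of_ne_zero hI
  set n := Nat.card (ClassGroup R)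
  have hn : n ≠ 0 := Nat.card_pos.ne'
  obtain ⟨a, ha⟩ : (I ^ n).IsPrincipal := by
    rw [← ClassGroup.mk0_eq_one_iff (pow_mem hI₀ n)]
    have hpow : (⟨I ^ n, pow_mem hI₀ n⟩ : (Ideal R)⁰) = ⟨I, hI₀⟩ ^ n := rfl
    rw [hpow, map_pow, pow_card_eq_one']
  rw [Ideal.submodule_span_eq] at ha
  refine ⟨a, Ideal.pow_le_self hn (ha ▸ Ideal.mem_span_singleton_self a), ?_, fun P hP haP => ?_⟩
  · rintro rfl
    exact pow_ne_zero n hI (by simpa using ha)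
  · exact hP.le_of_pow_le (ha ▸ (Ideal.span_singleton_le_iff_mem P).mpr haP)

end

namespace Set
variable {R : Type*} [CommRing R] (S : Set (HeightOneSpectrum R))

def integerDenominators : Submonoid R := R⁰ ⊓ ⨅ (v) (_ : v ∉ S), v.asIdeal.primeCompl

variable {S} in
theorem mem_integerDenominators {a : R} :
    a ∈ S.integerDenominators ↔ a ∈ R⁰ ∧ ∀ v ∉ S, a ∉ v.asIdeal := by
  simp [integerDenominators, Submonoid.mem_inf, Submonoid.mem_iInf, Ideal.primeCompl]

theorem integerDenominators_le_nonZeroDivisors : S.integerDenominators ≤ R⁰ := inf_le_left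

variable [IsDedekindDomain R] (K : Type*) [Field K] [Algebra R K] [IsFractionRing R K]

theorem isUnit_algebraMap_integer {a : R} (ha : a ∈ S.integerDenominators) :
    IsUnit (algebraMap R (S.integer K) a) := by
  have hinv : (algebraMap R K a)⁻¹ ∈ S.integer K := fun v hv => by
    rw [map_inv₀, (v.valuation_eq_one_iff_notMem).mpr ((mem_integerDenominators.mp ha).2 v hv),
      inv_one]
  refine IsUnit.of_mul_eq_one ⟨_, hinv⟩ (Subtype.ext ?_)
  exact mul_inv_cancel₀ (IsFractionRing.to_map_ne_zero_of_mem_nonZeroDivisors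
    (integerDenominators_le_nonZeroDivisors S ha))

theorem exists_integerDenominators_mul_eq [Finite (ClassGroup R)] {z : K}
    (hz : z ∈ S.integer K) :
    ∃ a ∈ S.integerDenominators, ∃ b : R, z * algebraMap R K a = algebraMap R K b := by
  -- the denominator ideal of `z`
  set D : Ideal R := (1 : Submodule R K).colon {z}
  have mem_D : ∀ {a : R}, (∃ b : R, z * algebraMap R K a = algebraMap R K b) → a ∈ D := by
    rintro a ⟨b, hb⟩
    rw [Submodule.mem_colon_singleton, Submodule.mem_one, Algebra.smul_def, mul_comm, hb]
    exact ⟨b, rfl⟩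
  have hD : D ≠ ⊥ := by
    obtain ⟨⟨b, s⟩, hs⟩ := IsLocalization.surj R⁰ z
    exact fun h => nonZeroDivisors.ne_zero s.2 ((Submodule.eq_bot_iff _).mp h _ (mem_D ⟨b, hs⟩))
  have hDv : ∀ v ∉ S, ¬ D ≤ v.asIdeal := fun v hv hle => by
    obtain ⟨b, ⟨d, hd⟩, hdb⟩ := v.exists_primeCompl_mul_eq_of_integer z (hz v hv)
    exact hd (hle (mem_D ⟨b, hdb⟩))
  obtain ⟨a, haD, ha0, hprime⟩ := Ideal.exists_mem_ne_zero_forall_isPrime_le hD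
  obtain ⟨b, hb⟩ := Submodule.mem_one.mp (Submodule.mem_colon_singleton.mp haD)
  refine ⟨a, mem_integerDenominators.mpr ⟨mem_nonZeroDivisors_of_ne_zero ha0,
    fun v hv hav => hDv v hv (hprime _ v.isPrime hav)⟩, b, ?_⟩
  rw [hb, Algebra.smul_def, mul_comm]

variable [Finite (ClassGroup R)]

instance isLocalization_integer : IsLocalization S.integerDenominators (S.integer K) where
  map_units a := isUnit_algebraMap_integer S K a.2
  surj z := by
    obtain ⟨a, ha, b, hb⟩ := exists_integerDenominators_mul_eq S K z.2
    exact ⟨(b, ⟨a, ha⟩), Subtype.ext hb⟩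
  exists_of_eq {a b} h := ⟨1, by simpa using IsFractionRing.injective R K (congrArg Subtype.val h)⟩

instance : IsDedekindDomain (S.integer K) :=
  IsLocalization.isDedekindDomain R (integerDenominators_le_nonZeroDivisors S) _

instance : IsFractionRing (S.integer K) K :=
  IsFractionRing.isFractionRing_of_isLocalization S.integerDenominators _ _
    (integerDenominators_le_nonZeroDivisors S)

end Set

theorem orbit_iff_same_ideal_class_general {K : Type*} [Field K] [NumberField K]
    (S : Finset (HeightOneSpectrum (NumberField.RingOfIntegers K)))
    (x y x' y' : sIntegers K S)
    (h : ((x : K), (y : K)) ≠ 0) :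
    (∃ (A : GL (Fin 2) (sIntegers K S)) (l : K), l ≠ 0 ∧
        (((A : Matrix (Fin 2) (Fin 2) (sIntegers K S)) 0 0 : K) * x
            + ((A : Matrix (Fin 2) (Fin 2) (sIntegers K S)) 0 1 : K) * y = l * x') ∧
        (((A : Matrix (Fin 2) (Fin 2) (sIntegers K S)) 1 0 : K) * x
            + ((A : Matrix (Fin 2) (Fin 2) (sIntegers K S)) 1 1 : K) * y = l * y')) ↔
    (∃ c d : sIntegers K S, c ≠ 0 ∧ d ≠ 0 ∧
        Ideal.span {c} * Ideal.span {x, y} = Ideal.span {d} * Ideal.span {x', y'}) := by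
  simp only [Ideal.span_singleton_mul_span_pair]
  refine (exists_congr fun A => exists_mul_eq_iff_exists_mulVec_eq (K := K) _ x y x' y').trans
    ⟨?_, ?_⟩
  · rintro ⟨A, c, d, hc, hd, hA⟩
    refine ⟨c, d, hc, hd, ?_⟩
    rw [← range_cons_cons_empty, ← range_cons_cons_empty, ← hA, Ideal.span_range_units_mulVec]
  · rintro ⟨c, d, hc, hd, hspan⟩
    have hne : Ideal.span {c * x, c * y} ≠ ⊥ := by simpa [hc, Prod.ext_iff] using h
    obtain ⟨N, hN⟩ := exists_SL2_mulVec_eq_of_span_pair_eq hspan hne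
    exact ⟨N, c, d, hc, hd, hN⟩

/-- two points `[x:y]` and `[x':y']` of `ℙ¹(K)` with `S`-integral coordinates lie
in the same `PGL₂(R_S)`-orbit if and only if the ideals `(x R_S + y R_S)` and
`(x' R_S + y' R_S)` belong to the same ideal class of `R_S`; hence the number of orbits is the
class number of `R_S`. -/
theorem orbit_iff_same_ideal_class {K : Type*} [Field K] [NumberField K]
    (S : Finset (HeightOneSpectrum (NumberField.RingOfIntegers K)))
    (x y x' y' : sIntegers K S)
    (h : ((x : K), (y : K)) ≠ 0) (h' : ((x' : K), (y' : K)) ≠ 0) :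
    (∃ (A : GL (Fin 2) (sIntegers K S)) (l : K), l ≠ 0 ∧
        (((A : Matrix (Fin 2) (Fin 2) (sIntegers K S)) 0 0 : K) * x
            + ((A : Matrix (Fin 2) (Fin 2) (sIntegers K S)) 0 1 : K) * y = l * x') ∧
        (((A : Matrix (Fin 2) (Fin 2) (sIntegers K S)) 1 0 : K) * x
            + ((A : Matrix (Fin 2) (Fin 2) (sIntegers K S)) 1 1 : K) * y = l * y')) ↔
    (∃ c d : sIntegers K S, c ≠ 0 ∧ d ≠ 0 ∧
        Ideal.span {c} * Ideal.span {x, y} = Ideal.span {d} * Ideal.span {x', y'}) :=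
  orbit_iff_same_ideal_class_general S x y x' y' h
end

section
/- Let (P_0, …, P_{n−1}) be a cycle for a rational map with good reduction outside S, and let i, j be coprime integers. Then for every prime p ∉ S, min{δ_p(P_0, P_i), δ_p(P_0, P_j)} = δ_p(P_0, P_1) (indices mod n). -/
open IsDedekindDomain
open scoped Classical

variable {K : Type*}

/-- Equality of coordinate pairs as points of `ℙ¹(K)`. -/
def projEq [Field K] (P Q : K × K) : Prop :=
  ∃ l : K, l ≠ 0 ∧ Q.1 = l * P.1 ∧ Q.2 = l * P.2

instance heightOneSpectrum_isMaximal [Field K] [NumberField K]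
    (p : HeightOneSpectrum (NumberField.RingOfIntegers K)) : p.asIdeal.IsMaximal :=
  Ring.DimensionLEOne.maximalOfPrime p.ne_bot p.isPrime

attribute [local instance] Ideal.Quotient.field

/-- A rational map of `ℙ¹`, given by a pair `(F, G)` of homogeneous polynomials of the same
degree with coefficients in the ring of integers, has good reduction at the prime `p` if some
coefficient of `F` or `G` is a `p`-adic unit and the reductions of `F` and `G` modulo `p` have
no common nontrivial root in the algebraic closure of the residue field (so that the reduced
map has the same degree). -/
def goodReductionAt [Field K] [NumberField K]
    (p : HeightOneSpectrum (NumberField.RingOfIntegers K))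
    (F G : MvPolynomial (Fin 2) (NumberField.RingOfIntegers K)) : Prop :=
  (∃ m, F.coeff m ∉ p.asIdeal ∨ G.coeff m ∉ p.asIdeal) ∧
  ∀ a b : AlgebraicClosure (NumberField.RingOfIntegers K ⧸ p.asIdeal), (a, b) ≠ 0 →
    ¬ (MvPolynomial.aeval ![a, b] (MvPolynomial.map (Ideal.Quotient.mk p.asIdeal) F) = 0 ∧
       MvPolynomial.aeval ![a, b] (MvPolynomial.map (Ideal.Quotient.mk p.asIdeal) G) = 0)

/-!
For `p ∉ S` the map `Φ = [F : G]` does not decrease `δ_p`. On normalized coordinates (both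
`p`-integral, one a `p`-unit) `δ_p(x, y) = v_p(x₁y₂ - x₂y₁)`. Good reduction makes `Φ` preserve
normalized points: if `v_p(F(x))` and `v_p(G(x))` were both positive, the Nullstellensatz over the
residue field, `X_i ^ N ≡ A F + B G (mod p)`, would give `v_p(x_i) > 0` at a unit coordinate.
And `y ≡ λ x (mod p^e)` with `e = δ_p(x, y)` gives `Φ(y) ≡ λ^d Φ(x) (mod p^e)`.

Along the cycle, `k ↦ δ_p(P_k, P_{k+m})` is therefore nondecreasing and `n`-periodic, hence
constant. So `D m = δ_p(P_0, P_m)` is even, `D 0 = ∞`, and `min (D a) (D b) ≤ D (a + b)` by the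
ultrametric triangle inequality: every `{m | c ≤ D m}` is a subgroup of `ℤ`, and `a i + b j = 1`
gives `min (D i) (D j) = D 1`.
-/

instance LinearOrderedAddCommGroupWithTop.toSubtractionCommMonoid {Γ : Type*}
    [LinearOrderedAddCommGroupWithTop Γ] : SubtractionCommMonoid Γ where
  add_comm := add_comm

theorem LinearOrderedAddCommGroupWithTop.add_sub_add_left_of_ne_top {Γ : Type*}
    [LinearOrderedAddCommGroupWithTop Γ] {c : Γ} (hc : c ≠ ⊤) (a b : Γ) :
    c + a - (c + b) = a - b := by
  rw [sub_add_eq_sub_sub, add_sub_right_comm, sub_self_eq_zero_iff_ne_top.2 hc, zero_add]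

section AddValp

variable [Field K] [NumberField K] (p : HeightOneSpectrum (NumberField.RingOfIntegers K))

theorem addValp_of_ne_zero {x : K} (hx : x ≠ 0) :
    addValp p x = ((-WithZero.log (p.valuation K x) : ℤ) : WithTop ℤ) := by
  rw [addValp, dif_neg hx, WithZero.toAdd_unzero_eq_log]

theorem addValp_le_addValp_iff {x y : K} :
    addValp p x ≤ addValp p y ↔ p.valuation K y ≤ p.valuation K x := by
  rcases eq_or_ne y 0 with rfl | hy
  · simp [addValp]
  rcases eq_or_ne x 0 with rfl | hx
  · simp [addValp, hy]
  rw [addValp_of_ne_zero p hx, addValp_of_ne_zero p hy, WithTop.coe_le_coe, neg_le_neg_iff,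
    WithZero.log_le_log (by simpa) (by simpa)]

theorem addValp_mul (x y : K) : addValp p (x * y) = addValp p x + addValp p y := by
  rcases eq_or_ne x 0 with rfl | hx
  · simp [addValp]
  rcases eq_or_ne y 0 with rfl | hy
  · simp [addValp]
  rw [addValp_of_ne_zero p hx, addValp_of_ne_zero p hy, addValp_of_ne_zero p (mul_ne_zero hx hy),
    map_mul, WithZero.log_mul (by simpa) (by simpa), neg_add, WithTop.coe_add]

noncomputable def addValuation : AddValuation K (WithTop ℤ) :=
  AddValuation.of (addValp p) (dif_pos rfl) (by simp [addValp_of_ne_zero])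
    (fun x y => by
      simp only [min_le_iff, addValp_le_addValp_iff, ← le_max_iff]
      exact (p.valuation K).map_add x y)
    (addValp_mul p)

theorem addValuation_algebraMap_nonneg (r : NumberField.RingOfIntegers K) :
    0 ≤ addValuation p (algebraMap _ K r) := by
  rw [← (addValuation p).map_one]
  exact (addValp_le_addValp_iff p).2 (by simpa using p.valuation_le_one r)

theorem addValuation_algebraMap_pos {r : NumberField.RingOfIntegers K} (hr : r ∈ p.asIdeal) :
    0 < addValuation p (algebraMap _ K r) := by
  rw [← (addValuation p).map_one, ← not_le]
  intro h
  have := (addValp_le_addValp_iff p).1 h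
  exact (map_one (p.valuation K) ▸ this).not_gt ((p.valuation_lt_one_iff_mem r).2 hr)

end AddValp

section ProjDist

open LinearOrderedAddCommGroupWithTop

variable {Γ : Type*} [LinearOrderedAddCommGroupWithTop Γ] [Field K] (v : AddValuation K Γ)

def cross (P Q : K × K) : K := P.1 * Q.2 - Q.1 * P.2

def projDist (P Q : K × K) : Γ :=
  v (cross P Q) - min (v P.1) (v P.2) - min (v Q.1) (v Q.2)

theorem deltap_eq_projDist [NumberField K] (p : HeightOneSpectrum (NumberField.RingOfIntegers K)) :
    deltap p = projDist (addValuation p) := rfl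

theorem projDist_comm (P Q : K × K) : projDist v P Q = projDist v Q P := by
  rw [projDist, projDist, cross, cross, ← v.map_neg, neg_sub, sub_right_comm]

theorem projDist_self (P : K × K) : projDist v P P = ⊤ := by
  simp [projDist, cross, sub_eq_add_neg]

theorem projDist_smul_right (P Q : K × K) {l : K} (hl : l ≠ 0) :
    projDist v P (l • Q) = projDist v P Q := by
  have hcross : cross P (l • Q) = l * cross P Q := by
    simp only [cross, Prod.smul_fst, Prod.smul_snd, smul_eq_mul]; ring
  simp only [projDist, hcross, Prod.smul_fst, Prod.smul_snd, smul_eq_mul, v.map_mul,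
    min_add_add_left]
  rw [add_sub_assoc]
  exact add_sub_add_left_of_ne_top (v.ne_top_iff.2 hl) _ _

theorem projDist_smul_left (P Q : K × K) {l : K} (hl : l ≠ 0) :
    projDist v (l • P) Q = projDist v P Q := by
  rw [projDist_comm, projDist_smul_right v Q P hl, projDist_comm]

theorem projEq.exists_eq_smul {P Q : K × K} (h : projEq P Q) : ∃ l : K, l ≠ 0 ∧ Q = l • P := by
  obtain ⟨l, hl, h1, h2⟩ := h
  exact ⟨l, hl, Prod.ext h1 h2⟩

theorem projDist_congr_right (P : K × K) {Q Q' : K × K} (h : projEq Q Q') :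
    projDist v P Q' = projDist v P Q := by
  obtain ⟨l, hl, rfl⟩ := h.exists_eq_smul
  exact projDist_smul_right v P Q hl

theorem projDist_congr_left {P P' : K × K} (Q : K × K) (h : projEq P P') :
    projDist v P' Q = projDist v P Q := by
  obtain ⟨l, hl, rfl⟩ := h.exists_eq_smul
  exact projDist_smul_left v P Q hl

def IsNormalized (P : K × K) : Prop := min (v P.1) (v P.2) = 0

variable {v}

theorem IsNormalized.nonneg_fst {P : K × K} (h : IsNormalized v P) : 0 ≤ v P.1 :=
  h ▸ min_le_left _ _

theorem IsNormalized.nonneg_snd {P : K × K} (h : IsNormalized v P) : 0 ≤ v P.2 :=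
  h ▸ min_le_right _ _

theorem projDist_of_isNormalized {P Q : K × K} (hP : IsNormalized v P) (hQ : IsNormalized v Q) :
    projDist v P Q = v (cross P Q) := by
  rw [projDist, hP, hQ, sub_zero, sub_zero]

theorem exists_smul_isNormalized {P : K × K} (hP : P ≠ 0) :
    ∃ l : K, l ≠ 0 ∧ IsNormalized v (l • P) := by
  have key : ∀ a b : K, v a ≤ v b → (a, b) ≠ 0 →
      ∃ l : K, l ≠ 0 ∧ min (v (l * a)) (v (l * b)) = 0 := by
    intro a b hab hne
    have ha : a ≠ 0 := by
      rintro rfl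
      exact hne (by simpa [Prod.ext_iff] using v.top_iff.1 (top_le_iff.1 (v.map_zero ▸ hab)))
    refine ⟨a⁻¹, inv_ne_zero ha, ?_⟩
    rw [v.map_mul, v.map_mul, min_add_add_left, min_eq_left hab, v.map_inv,
      neg_add_cancel_of_ne_top (v.ne_top_iff.2 ha)]
  rcases le_total (v P.1) (v P.2) with h | h
  · simpa [IsNormalized] using key P.1 P.2 h hP
  · obtain ⟨l, hl, hmin⟩ := key P.2 P.1 h (by simpa [Prod.ext_iff, and_comm] using hP)
    exact ⟨l, hl, by simpa [IsNormalized, min_comm] using hmin⟩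

theorem min_le_map_cross_of_isNormalized {P Q T : K × K}
    (hP : IsNormalized v P) (hQ : IsNormalized v Q) (hT : IsNormalized v T) :
    min (v (cross P Q)) (v (cross Q T)) ≤ v (cross P T) := by
  have key : ∀ q t s : K, v q = 0 → 0 ≤ v t → 0 ≤ v s →
      q * cross P T = cross P Q * t + cross Q T * s →
      min (v (cross P Q)) (v (cross Q T)) ≤ v (cross P T) := by
    intro q t s hq ht hs hid
    calc min (v (cross P Q)) (v (cross Q T))
        ≤ min (v (cross P Q * t)) (v (cross Q T * s)) := by
          rw [v.map_mul, v.map_mul]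
          exact min_le_min (le_add_of_nonneg_right ht) (le_add_of_nonneg_right hs)
      _ ≤ v (cross P Q * t + cross Q T * s) := v.map_add _ _
      _ = v (cross P T) := by rw [← hid, v.map_mul, hq, zero_add]
  rcases min_eq_iff.1 hQ with ⟨hQ1, -⟩ | ⟨hQ2, -⟩
  · exact key Q.1 T.1 P.1 hQ1 hT.nonneg_fst hP.nonneg_fst (by simp only [cross]; ring)
  · exact key Q.2 T.2 P.2 hQ2 hT.nonneg_snd hP.nonneg_snd (by simp only [cross]; ring)

theorem projDist_triangle {P Q T : K × K} (hP : P ≠ 0) (hQ : Q ≠ 0) (hT : T ≠ 0) :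
    min (projDist v P Q) (projDist v Q T) ≤ projDist v P T := by
  obtain ⟨a, ha, hPn⟩ := exists_smul_isNormalized (v := v) hP
  obtain ⟨b, hb, hQn⟩ := exists_smul_isNormalized (v := v) hQ
  obtain ⟨c, hc, hTn⟩ := exists_smul_isNormalized (v := v) hT
  rw [← projDist_smul_left v P Q ha, ← projDist_smul_right v _ Q hb,
    ← projDist_smul_left v Q T hb, ← projDist_smul_right v _ T hc,
    ← projDist_smul_left v P T ha, ← projDist_smul_right v _ T hc,
    projDist_of_isNormalized hPn hQn, projDist_of_isNormalized hQn hTn,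
    projDist_of_isNormalized hPn hTn]
  exact min_le_map_cross_of_isNormalized hPn hQn hTn

theorem IsNormalized.exists_le_map_sub_smul {x y : K × K} (hx : IsNormalized v x)
    (hy : IsNormalized v y) : ∃ l : K, 0 ≤ v l ∧
      v (cross x y) ≤ v (y.1 - l * x.1) ∧ v (cross x y) ≤ v (y.2 - l * x.2) := by
  rcases min_eq_iff.1 hx with ⟨hx1, -⟩ | ⟨hx2, -⟩
  · have hne : x.1 ≠ 0 := v.ne_top_iff.1 (hx1 ▸ zero_ne_top)
    refine ⟨y.1 / x.1, ?_, ?_, ?_⟩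
    · simpa [v.map_div, hx1] using hy.nonneg_fst
    · simp [div_mul_cancel₀ _ hne]
    · have : y.2 - y.1 / x.1 * x.2 = cross x y / x.1 := by
        rw [cross]; field_simp
      simp [this, v.map_div, hx1]
  · have hne : x.2 ≠ 0 := v.ne_top_iff.1 (hx2 ▸ zero_ne_top)
    refine ⟨y.2 / x.2, ?_, ?_, ?_⟩
    · simpa [v.map_div, hx2] using hy.nonneg_snd
    · have : y.1 - y.2 / x.2 * x.1 = -(cross x y / x.2) := by
        rw [cross]; field_simp; ring
      simp [this, v.map_div, hx2]
    · simp [div_mul_cancel₀ _ hne]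

end ProjDist

namespace MvPolynomial

theorem IsHomogeneous.aeval_smul {σ R S : Type*} [CommSemiring R] [CommSemiring S] [Algebra R S]
    {φ : MvPolynomial σ R} {n : ℕ} (hφ : φ.IsHomogeneous n) (l : S) (x : σ → S) :
    MvPolynomial.aeval (l • x) φ = l ^ n * MvPolynomial.aeval x φ := by
  simp only [aeval_def, eval₂_eq, Finset.mul_sum]
  refine Finset.sum_congr rfl fun m hm => ?_
  rw [hφ.degree_eq_sum_deg_support hm, ← Finset.prod_pow_eq_pow_sum]
  simp only [Pi.smul_apply, smul_eq_mul, mul_pow, Finset.prod_mul_distrib]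
  ring

theorem exists_X_pow_mem_span_pair {σ k L : Type*} [Finite σ] [Field k] [Field L] [IsAlgClosed L]
    [Algebra k L] {F G : MvPolynomial σ k}
    (h : ∀ x : σ → L, aeval x F = 0 → aeval x G = 0 → x = 0) (i : σ) :
    ∃ N : ℕ, X i ^ N ∈ Ideal.span {F, G} := by
  rw [← Ideal.mem_radical_iff, ← vanishingIdeal_zeroLocus_eq_radical (K := L)]
  intro x hx
  have hx0 := h x (hx F (Ideal.subset_span (by simp))) (hx G (Ideal.subset_span (by simp)))
  simp [hx0]

end MvPolynomial

open MvPolynomial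

section Estimates

variable {Γ : Type*} [LinearOrderedAddCommGroupWithTop Γ] [Field K] {v : AddValuation K Γ}
  {R σ : Type*} [CommRing R] [Algebra R K]

theorem AddValuation.map_aeval_nonneg (hR : ∀ r : R, 0 ≤ v (algebraMap R K r))
    {x : σ → K} (hx : ∀ i, 0 ≤ v (x i)) (H : MvPolynomial σ R) :
    0 ≤ v (aeval x H) := by
  induction H using MvPolynomial.induction_on with
  | C a => simpa using hR a
  | add H₁ H₂ h₁ h₂ => rw [_root_.map_add]; exact (le_min h₁ h₂).trans (v.map_add _ _)
  | mul_X H i h => rw [_root_.map_mul, aeval_X, v.map_mul]; exact add_nonneg h (hx i)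

theorem AddValuation.le_map_aeval_sub (hR : ∀ r : R, 0 ≤ v (algebraMap R K r))
    {x y : σ → K} {e : Γ} (hx : ∀ i, 0 ≤ v (x i))
    (hy : ∀ i, 0 ≤ v (y i)) (hxy : ∀ i, e ≤ v (x i - y i)) (H : MvPolynomial σ R) :
    e ≤ v (aeval x H - aeval y H) := by
  induction H using MvPolynomial.induction_on with
  | C a => simp
  | add H₁ H₂ h₁ h₂ =>
    rw [_root_.map_add, _root_.map_add, add_sub_add_comm]
    exact (le_min h₁ h₂).trans (v.map_add _ _)
  | mul_X H i h =>
    have hsplit : aeval x (H * X i) - aeval y (H * X i)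
        = aeval x H * (x i - y i) + (aeval x H - aeval y H) * y i := by
      simp only [_root_.map_mul, aeval_X]; ring
    rw [hsplit]
    refine le_trans (le_min ?_ ?_) (v.map_add _ _)
    · rw [v.map_mul]; exact (hxy i).trans (le_add_of_nonneg_left (v.map_aeval_nonneg hR hx H))
    · rw [v.map_mul]; exact h.trans (le_add_of_nonneg_right (hy i))

theorem AddValuation.map_aeval_pos_of_mem_span (hR : ∀ r : R, 0 ≤ v (algebraMap R K r))
    {x : σ → K} (hx : ∀ i, 0 ≤ v (x i))
    {s : Set (MvPolynomial σ R)} (hs : ∀ H ∈ s, 0 < v (aeval x H)) {H : MvPolynomial σ R}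
    (hH : H ∈ Ideal.span s) : 0 < v (aeval x H) := by
  induction hH using Submodule.span_induction with
  | mem H h => exact hs H h
  | zero => simp
  | add H₁ H₂ _ _ h₁ h₂ => rw [_root_.map_add]; exact (lt_min h₁ h₂).trans_le (v.map_add _ _)
  | smul c H _ h =>
    rw [smul_eq_mul, _root_.map_mul, v.map_mul]
    exact h.trans_le (le_add_of_nonneg_left (v.map_aeval_nonneg hR hx c))

end Estimates

section RationalMap

variable {R : Type*} [CommRing R] [Field K] [Algebra R K]

noncomputable def polyMap (F G : MvPolynomial (Fin 2) R) (x : K × K) : K × K :=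
  (aeval ![x.1, x.2] F, aeval ![x.1, x.2] G)

theorem polyMap_smul {F G : MvPolynomial (Fin 2) R} {d : ℕ} (hF : F.IsHomogeneous d)
    (hG : G.IsHomogeneous d) (l : K) (x : K × K) :
    polyMap F G (l • x) = l ^ d • polyMap F G x := by
  have hx : ![(l • x).1, (l • x).2] = l • ![x.1, x.2] := by
    ext i; fin_cases i <;> rfl
  simp only [polyMap, hx, hF.aeval_smul, hG.aeval_smul, Prod.smul_mk, smul_eq_mul]

end RationalMap

section GoodReduction

variable [Field K] [NumberField K] {p : HeightOneSpectrum (NumberField.RingOfIntegers K)}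
  {F G : MvPolynomial (Fin 2) (NumberField.RingOfIntegers K)}

theorem goodReductionAt.exists_X_pow_mem (h : goodReductionAt p F G) (i : Fin 2) :
    ∃ N : ℕ, X i ^ N ∈ Ideal.span {F, G} ⊔ Ideal.map C p.asIdeal := by
  let π : MvPolynomial (Fin 2) (NumberField.RingOfIntegers K) →+* _ :=
    MvPolynomial.map (Ideal.Quotient.mk p.asIdeal)
  have hroot : ∀ x : Fin 2 → AlgebraicClosure (NumberField.RingOfIntegers K ⧸ p.asIdeal),
      aeval x (π F) = 0 → aeval x (π G) = 0 → x = 0 := by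
    intro x hF hG
    have hx : ![x 0, x 1] = x := by ext i; fin_cases i <;> rfl
    by_contra hx0
    refine h.2 (x 0) (x 1) (fun h0 => hx0 ?_) ⟨by rwa [hx], by rwa [hx]⟩
    ext i; fin_cases i
    exacts [congrArg Prod.fst h0, congrArg Prod.snd h0]
  obtain ⟨N, hN⟩ := exists_X_pow_mem_span_pair hroot i
  refine ⟨N, ?_⟩
  have hker : Ideal.comap π ⊥ = Ideal.map C p.asIdeal := by
    rw [← RingHom.ker_eq_comap_bot, MvPolynomial.ker_map, Ideal.mk_ker]
  rw [← hker, ← Ideal.comap_map_of_surjective π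
    (MvPolynomial.map_surjective _ Ideal.Quotient.mk_surjective), Ideal.mem_comap,
    Ideal.map_span, Set.image_pair]
  simpa [π] using hN

theorem goodReductionAt.isNormalized_polyMap (h : goodReductionAt p F G) {x : K × K}
    (hx : IsNormalized (addValuation p) x) : IsNormalized (addValuation p) (polyMap F G x) := by
  set v := addValuation p
  have hR := addValuation_algebraMap_nonneg p
  have hx' : ∀ i, 0 ≤ v (![x.1, x.2] i) := Fin.forall_fin_two.2 ⟨hx.nonneg_fst, hx.nonneg_snd⟩
  obtain ⟨i, hi⟩ : ∃ i, v (![x.1, x.2] i) = 0 := by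
    rcases min_eq_iff.1 hx with ⟨hx1, -⟩ | ⟨hx2, -⟩
    exacts [⟨0, hx1⟩, ⟨1, hx2⟩]
  refine le_antisymm ?_ (le_min (v.map_aeval_nonneg hR hx' F) (v.map_aeval_nonneg hR hx' G))
  by_contra hpos
  rw [not_le, lt_min_iff] at hpos
  obtain ⟨N, hN⟩ := h.exists_X_pow_mem i
  rw [Ideal.map, ← Ideal.span_union] at hN
  -- `x_i` is a `p`-unit, yet `x_i ^ N` is a combination of `F(x)`, `G(x)` and multiples of `p`
  have hXpos := v.map_aeval_pos_of_mem_span hR hx' (s := {F, G} ∪ C '' p.asIdeal) ?_ hN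
  · rw [map_pow, aeval_X, v.map_pow, hi, smul_zero] at hXpos
    exact lt_irrefl _ hXpos
  · rintro H ((rfl | rfl) | ⟨a, ha, rfl⟩)
    exacts [hpos.1, hpos.2, by simpa using addValuation_algebraMap_pos p ha]

end GoodReduction

section Expanding

variable [Field K] [NumberField K] {p : HeightOneSpectrum (NumberField.RingOfIntegers K)}
  {F G : MvPolynomial (Fin 2) (NumberField.RingOfIntegers K)} {d : ℕ}

theorem projDist_le_projDist_polyMap_of_isNormalized (hF : F.IsHomogeneous d)
    (hG : G.IsHomogeneous d) (h : goodReductionAt p F G) {x y : K × K}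
    (hx : IsNormalized (addValuation p) x) (hy : IsNormalized (addValuation p) y) :
    projDist (addValuation p) x y ≤
      projDist (addValuation p) (polyMap F G x) (polyMap F G y) := by
  set v := addValuation p
  have hR := addValuation_algebraMap_nonneg p
  rw [projDist_of_isNormalized hx hy,
    projDist_of_isNormalized (h.isNormalized_polyMap hx) (h.isNormalized_polyMap hy)]
  set e := v (cross x y)
  obtain ⟨l, hl, h1, h2⟩ := hx.exists_le_map_sub_smul hy
  set x' : Fin 2 → K := ![x.1, x.2]
  set y' : Fin 2 → K := ![y.1, y.2]
  have hx' : ∀ i, 0 ≤ v (x' i) := Fin.forall_fin_two.2 ⟨hx.nonneg_fst, hx.nonneg_snd⟩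
  have hy' : ∀ i, 0 ≤ v (y' i) := Fin.forall_fin_two.2 ⟨hy.nonneg_fst, hy.nonneg_snd⟩
  have hlx' : ∀ i, 0 ≤ v ((l • x') i) := fun i => by
    rw [Pi.smul_apply, smul_eq_mul, v.map_mul]; exact add_nonneg hl (hx' i)
  -- `y ≡ l • x` modulo elements of valuation `e`, hence so are their images
  have hyx : ∀ i, e ≤ v (y' i - (l • x') i) := Fin.forall_fin_two.2 ⟨h1, h2⟩
  have hFe := v.le_map_aeval_sub hR hy' hlx' hyx F
  have hGe := v.le_map_aeval_sub hR hy' hlx' hyx G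
  rw [hF.aeval_smul] at hFe
  rw [hG.aeval_smul] at hGe
  have hcross : cross (polyMap F G x) (polyMap F G y) =
      aeval x' F * (aeval y' G - l ^ d * aeval x' G) -
        (aeval y' F - l ^ d * aeval x' F) * aeval x' G := by
    simp only [cross, polyMap]; ring
  rw [hcross]
  refine v.map_le_sub ?_ ?_ <;> rw [v.map_mul]
  · exact hGe.trans (le_add_of_nonneg_left (v.map_aeval_nonneg hR hx' F))
  · exact hFe.trans (le_add_of_nonneg_right (v.map_aeval_nonneg hR hx' G))

theorem projDist_le_projDist_polyMap (hF : F.IsHomogeneous d) (hG : G.IsHomogeneous d)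
    (h : goodReductionAt p F G) {x y : K × K} (hx : x ≠ 0) (hy : y ≠ 0) :
    projDist (addValuation p) x y ≤
      projDist (addValuation p) (polyMap F G x) (polyMap F G y) := by
  obtain ⟨a, ha, hax⟩ := exists_smul_isNormalized (v := addValuation p) hx
  obtain ⟨b, hb, hby⟩ := exists_smul_isNormalized (v := addValuation p) hy
  have := projDist_le_projDist_polyMap_of_isNormalized hF hG h hax hby
  rwa [projDist_smul_left _ _ _ ha, projDist_smul_right _ _ _ hb, polyMap_smul hF hG,
    polyMap_smul hF hG, projDist_smul_left _ _ _ (pow_ne_zero d ha),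
    projDist_smul_right _ _ _ (pow_ne_zero d hb)] at this

end Expanding

theorem Function.Periodic.eq_of_monotone {α : Type*} [PartialOrder α] {g : ℤ → α} {n : ℤ}
    (hper : Function.Periodic g n) (hn : 0 < n) (hmono : Monotone g) (a b : ℤ) : g a = g b := by
  have hanti : Antitone g := antitone_int_of_succ_le fun k =>
    (hmono (by omega : k + 1 ≤ k + n)).trans_eq (hper k)
  rcases le_total a b with hab | hab
  exacts [le_antisymm (hmono hab) (hanti hab), le_antisymm (hanti hab) (hmono hab)]

section Ultrametric

variable {α : Type*} [LinearOrder α] [OrderTop α] {D : ℤ → α}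

def superlevelAddSubgroup (h0 : D 0 = ⊤) (hneg : ∀ m, D (-m) = D m)
    (hadd : ∀ a b, min (D a) (D b) ≤ D (a + b)) (c : α) : AddSubgroup ℤ where
  carrier := {m | c ≤ D m}
  zero_mem' := by simp [h0]
  add_mem' ha hb := (le_min ha hb).trans (hadd _ _)
  neg_mem' {m} hm := by simpa [hneg m] using hm

theorem min_eq_of_isCoprime (h0 : D 0 = ⊤) (hneg : ∀ m, D (-m) = D m)
    (hadd : ∀ a b, min (D a) (D b) ≤ D (a + b)) {i j : ℤ} (hij : IsCoprime i j) :
    min (D i) (D j) = D 1 := by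
  let H := superlevelAddSubgroup h0 hneg hadd
  have hone : ∀ m : ℤ, m ∈ H (D 1) := fun m => by
    simpa using zsmul_mem (show (1 : ℤ) ∈ H (D 1) from le_refl (D 1)) m
  refine le_antisymm ?_ (le_min (hone i) (hone j))
  obtain ⟨a, b, hab⟩ := hij
  have hmem : a • i + b • j ∈ H (min (D i) (D j)) :=
    add_mem (zsmul_mem (min_le_left _ _) a) (zsmul_mem (min_le_right _ _) b)
  rwa [smul_eq_mul, smul_eq_mul, hab] at hmem

end Ultrametric

section Cycle

variable {Γ : Type*} [LinearOrderedAddCommGroupWithTop Γ] [Field K] {v : AddValuation K Γ}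

theorem min_projDist_eq_of_isCoprime (Φ : K × K → K × K)
    (hΦ : ∀ x y : K × K, x ≠ 0 → y ≠ 0 → projDist v x y ≤ projDist v (Φ x) (Φ y))
    {n : ℕ} (hn : 1 ≤ n) {P : ℤ → K × K} (hP : ∀ i, P i ≠ 0)
    (hstep : ∀ i, projEq (P (i + 1)) (Φ (P i))) (hper : ∀ i : ℤ, projEq (P i) (P (i + n)))
    {i j : ℤ} (hij : IsCoprime i j) :
    min (projDist v (P 0) (P i)) (projDist v (P 0) (P j)) = projDist v (P 0) (P 1) := by
  have hshift : ∀ m k : ℤ, projDist v (P k) (P (k + m)) = projDist v (P 0) (P m) := by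
    intro m
    have hmono : Monotone fun k => projDist v (P k) (P (k + m)) := by
      refine monotone_int_of_le_succ fun k => ?_
      have := hΦ _ _ (hP k) (hP (k + m))
      rwa [projDist_congr_left _ _ (hstep k), projDist_congr_right _ _ (hstep (k + m)),
        add_right_comm] at this
    have hperiodic : Function.Periodic (fun k => projDist v (P k) (P (k + m))) n := fun k => by
      simp only [add_right_comm k (n : ℤ) m]
      rw [projDist_congr_left _ _ (hper k), projDist_congr_right _ _ (hper (k + m))]
    intro k
    simpa using hperiodic.eq_of_monotone (by omega) hmono k 0
  refine min_eq_of_isCoprime (D := fun m => projDist v (P 0) (P m)) (projDist_self v _)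
    (fun m => ?_) (fun a b => ?_) hij
  · rw [← hshift (-m) m, add_neg_cancel, projDist_comm]
  · simpa only [hshift] using projDist_triangle (v := v) (hP 0) (hP a) (hP (a + b))

end Cycle

theorem min_deltap_coprime_indices_general [Field K] [NumberField K]
    (S : Finset (HeightOneSpectrum (NumberField.RingOfIntegers K)))
    (F G : MvPolynomial (Fin 2) (NumberField.RingOfIntegers K)) (d : ℕ)
    (hF : F.IsHomogeneous d) (hG : G.IsHomogeneous d)
    (hgood : ∀ p ∉ S, goodReductionAt p F G)
    (n : ℕ) (hn : 1 ≤ n) (P : ℤ → K × K)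
    (hP : ∀ i, P i ≠ 0)
    (hstep : ∀ i : ℤ, ∃ l : K, l ≠ 0 ∧
      MvPolynomial.aeval ![(P i).1, (P i).2] F = l * (P (i + 1)).1 ∧
      MvPolynomial.aeval ![(P i).1, (P i).2] G = l * (P (i + 1)).2)
    (hper : ∀ i : ℤ, projEq (P i) (P (i + n)))
    (i j : ℤ) (hij : IsCoprime i j) :
    ∀ p ∉ S, min (deltap p (P 0) (P i)) (deltap p (P 0) (P j)) = deltap p (P 0) (P 1) := by
  intro p hp
  rw [deltap_eq_projDist]
  exact min_projDist_eq_of_isCoprime (polyMap F G)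
    (fun x y => projDist_le_projDist_polyMap hF hG (hgood p hp)) hn hP hstep hper hij

/-- if `(P 0, …, P (n-1))` is a cycle for a rational map `Φ = [F : G]` with good
reduction outside `S` and `i, j` are coprime integers, then for every prime `p ∉ S`,
`min (δ_p(P 0, P i)) (δ_p(P 0, P j)) = δ_p(P 0, P 1)`. -/
theorem min_deltap_coprime_indices [Field K] [NumberField K]
    (S : Finset (HeightOneSpectrum (NumberField.RingOfIntegers K)))
    (F G : MvPolynomial (Fin 2) (NumberField.RingOfIntegers K)) (d : ℕ) (hd : 1 ≤ d)
    (hF : F.IsHomogeneous d) (hG : G.IsHomogeneous d)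
    (hFG : ∀ a b : K, MvPolynomial.aeval ![a, b] F = 0 → MvPolynomial.aeval ![a, b] G = 0 →
      (a, b) = 0)
    (hgood : ∀ p ∉ S, goodReductionAt p F G)
    (n : ℕ) (hn : 1 ≤ n) (P : ℤ → K × K)
    (hP : ∀ i, P i ≠ 0)
    (hstep : ∀ i : ℤ, ∃ l : K, l ≠ 0 ∧
      MvPolynomial.aeval ![(P i).1, (P i).2] F = l * (P (i + 1)).1 ∧
      MvPolynomial.aeval ![(P i).1, (P i).2] G = l * (P (i + 1)).2)
    (hper : ∀ i : ℤ, projEq (P i) (P (i + n)))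
    (hdist : ∀ i j : ℤ, 0 ≤ i → i < j → j < n → ¬ projEq (P i) (P j))
    (i j : ℤ) (hij : IsCoprime i j) :
    ∀ p ∉ S, min (deltap p (P 0) (P i)) (deltap p (P 0) (P j)) = deltap p (P 0) (P 1) :=
  min_deltap_coprime_indices_general S F G d hF hG hgood n hn P hP hstep hper i j hij
end

section
/- The set of prime numbers dividing 2^{2n} − 2^n + 1 for some n ∈ N is infinite. -/
/-- Key lemma: if `2^n ≡ 1` mod a prime `p`, then `p` does not divide `2^{2n}-2^n+1`
(for `n ≥ 1`). -/
lemma not_dvd_of_pow_eq_one {p n : ℕ} (hp : p.Prime) (h1 : (2 : ZMod p) ^ n = 1)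
    (hn : 1 ≤ n) : ¬ p ∣ 2 ^ (2 * n) - 2 ^ n + 1 := by
  intro hdvd
  have hle : 2 ^ n ≤ 2 ^ (2 * n) := Nat.pow_le_pow_right (by norm_num) (by omega)
  haveI := Fact.mk hp
  have hcast : ((2 ^ (2 * n) - 2 ^ n + 1 : ℕ) : ZMod p) = 0 :=
    (ZMod.natCast_eq_zero_iff _ _).2 hdvd
  rw [Nat.cast_add, Nat.cast_sub hle] at hcast
  push_cast at hcast
  rw [two_mul, pow_add, h1] at hcast
  simp at hcast

/-- the set of prime numbers dividing `2^{2n} - 2^n + 1` for some `n ∈ ℕ` is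
infinite. -/
theorem infinite_primes_dividing : {p : ℕ | p.Prime ∧ ∃ n : ℕ, p ∣ 2 ^ (2 * n) - 2 ^ n + 1}.Infinite := by
  by_contra h
  rw [Set.not_infinite] at h
  set F := h.toFinset with hF
  set n := ∏ p ∈ F, (p - 1) with hn
  have hn1 : 1 ≤ n := Finset.one_le_prod' (fun p hp => by
    have h2 := ((h.mem_toFinset.1 hp).1).two_le
    omega)
  -- the number M
  set M := 2 ^ (2 * n) - 2 ^ n + 1 with hM
  have hx : 2 ≤ 2 ^ n := by
    calc 2 = 2 ^ 1 := by norm_num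
    _ ≤ 2 ^ n := Nat.pow_le_pow_right (by norm_num) hn1
  have hsq : 2 * 2 ^ n ≤ 2 ^ (2 * n) := by
    have h' : 2 ^ (2 * n) = 2 ^ n * 2 ^ n := by rw [two_mul, pow_add]
    nlinarith
  have hM1 : 1 < M := by
    have := hx
    omega
  have hq : M.minFac.Prime := Nat.minFac_prime (by omega)
  have hqdvd : M.minFac ∣ M := Nat.minFac_dvd M
  have hqmem : M.minFac ∈ F := h.mem_toFinset.2 ⟨hq, n, hqdvd⟩
  -- M is odd, so minFac is odd
  have hModd : ¬ 2 ∣ M := by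
    have h2 : 2 ∣ 2 ^ (2 * n) - 2 ^ n := by
      have : 2 ∣ 2 ^ (2 * n) := dvd_pow_self 2 (by omega)
      have h' : 2 ∣ 2 ^ n := dvd_pow_self 2 (by omega)
      omega
    omega
  have hqne2 : M.minFac ≠ 2 := fun he => hModd (he ▸ hqdvd)
  -- 2 ≠ 0 in ZMod minFac
  haveI := Fact.mk hq
  have h2ne : (2 : ZMod M.minFac) ≠ 0 := by
    intro h0
    have : (M.minFac : ℕ) ∣ 2 := (ZMod.natCast_eq_zero_iff 2 _).1 (by exact_mod_cast h0)
    have h2 := hq.two_le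
    have hle2 := Nat.le_of_dvd (by norm_num) this
    exact hqne2 (by omega)
  have hfermat : (2 : ZMod M.minFac) ^ (M.minFac - 1) = 1 :=
    ZMod.pow_card_sub_one_eq_one h2ne
  have hdvd_n : (M.minFac - 1) ∣ n := Finset.dvd_prod_of_mem _ hqmem
  obtain ⟨k, hk⟩ := hdvd_n
  have hpow : (2 : ZMod M.minFac) ^ n = 1 := by
    rw [hk, pow_mul, hfermat, one_pow]
  exact not_dvd_of_pow_eq_one hq hpow hn1 hqdvd
end
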